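/- Let φ(λ) = ∫₀^∞ (1 - e^{-λt}) μ(dt) with ∫ (1 ∧ t) μ(dt) < ∞, and define H(λ) = φ(λ) - λ φ'(λ). Then H(λx) ≤ x² H(λ) for all λ > 0 and x ≥ 1. -/

import Mathlib

/-!
Write `H(λ) = ∫ g(λt) μ(dt)` with `g(v) = 1 - e^{-v} - v e^{-v} = ∫₀^v s e^{-s} ds`.
Substituting `s = vr` gives `g(v) = v² ∫₀¹ r e^{-vr} dr`, so `g(v) / v²` is nonincreasing and
`g(vx) ≤ x² g(v)` for `x ≥ 1`. Integrating this against `μ` gives the claim; integrability comes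
from `0 ≤ g(v) ≤ min 1 v`.
-/

open MeasureTheory Real Set

noncomputable def hKernel (v : ℝ) : ℝ := 1 - exp (-v) - v * exp (-v)

@[fun_prop]
theorem continuous_hKernel : Continuous hKernel := by
  unfold hKernel
  fun_prop

theorem hKernel_nonneg (v : ℝ) : 0 ≤ hKernel v := by
  have h : (v + 1) * exp (-v) ≤ 1 := by
    rw [← le_div_iff₀ (exp_pos _), one_div, ← exp_neg, neg_neg]
    exact add_one_le_exp v
  unfold hKernel
  linarith

theorem hKernel_le_min_one {v : ℝ} (hv : 0 ≤ v) : hKernel v ≤ min 1 v := by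
  have h₁ : 0 ≤ v * exp (-v) := mul_nonneg hv (exp_pos _).le
  have h₂ : 1 - v ≤ exp (-v) := by linarith [add_one_le_exp (-v)]
  unfold hKernel
  exact le_min (by linarith [exp_pos (-v)]) (by linarith)

theorem hKernel_eq_integral (v : ℝ) : hKernel v = ∫ s in (0 : ℝ)..v, s * exp (-s) := by
  have hderiv (s : ℝ) : HasDerivAt (fun s => -((s + 1) * exp (-s))) (s * exp (-s)) s :=
    (((hasDerivAt_id' s).add_const 1).mul (hasDerivAt_neg s).exp).neg.congr_deriv (by ring)
  rw [intervalIntegral.integral_eq_sub_of_hasDerivAt (fun s _ => hderiv s)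
    ((by fun_prop : Continuous fun s => s * exp (-s)).intervalIntegrable _ _)]
  simp only [hKernel, neg_zero, exp_zero]
  ring

theorem hKernel_eq_sq_mul_integral (v : ℝ) :
    hKernel v = v ^ 2 * ∫ r in (0 : ℝ)..1, r * exp (-(v * r)) := by
  have h := intervalIntegral.smul_integral_comp_mul_left (fun s => s * exp (-s)) v
    (a := 0) (b := 1)
  rw [mul_zero, mul_one, smul_eq_mul] at h
  rw [hKernel_eq_integral, ← h, sq, mul_assoc,
    ← intervalIntegral.integral_const_mul v (fun r => r * exp (-(v * r)))]
  simp only [mul_assoc]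

theorem antitone_integral_mul_exp_neg_mul :
    Antitone fun v : ℝ => ∫ r in (0 : ℝ)..1, r * exp (-(v * r)) := by
  intro v w hvw
  refine intervalIntegral.integral_mono_on zero_le_one
    ((by fun_prop : Continuous fun r => r * exp (-(w * r))).intervalIntegrable _ _)
    ((by fun_prop : Continuous fun r => r * exp (-(v * r))).intervalIntegrable _ _)
    fun r hr => ?_
  have : 0 ≤ r := hr.1
  gcongr

theorem hKernel_mul_le {v x : ℝ} (hv : 0 ≤ v) (hx : 1 ≤ x) :
    hKernel (v * x) ≤ x ^ 2 * hKernel v := by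
  rw [hKernel_eq_sq_mul_integral, hKernel_eq_sq_mul_integral, mul_pow, mul_comm (v ^ 2),
    mul_assoc]
  gcongr
  exact antitone_integral_mul_exp_neg_mul (le_mul_of_one_le_right hv hx)

theorem min_one_mul_le {c t : ℝ} (ht : 0 ≤ t) :
    min 1 (c * t) ≤ max 1 c * min 1 t := by
  rcases le_total t 1 with h | h
  · rw [min_eq_right h]
    exact (min_le_right _ _).trans (mul_le_mul_of_nonneg_right (le_max_right _ _) ht)
  · rw [min_eq_left h, mul_one]
    exact (min_le_left _ _).trans (le_max_left _ _)

theorem integrableOn_hKernel_comp_mul {μ : Measure ℝ}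
    (hμ : IntegrableOn (fun t => min 1 t) (Ioi 0) μ) {c : ℝ} (hc : 0 ≤ c) :
    IntegrableOn (fun t => hKernel (c * t)) (Ioi 0) μ := by
  refine (hμ.const_mul (max 1 c)).mono' (by fun_prop : Continuous _).aestronglyMeasurable ?_
  refine (ae_restrict_iff' measurableSet_Ioi).2 (.of_forall fun t (ht : 0 < t) => ?_)
  have hct : 0 ≤ c * t := mul_nonneg hc ht.le
  rw [norm_of_nonneg (hKernel_nonneg _)]
  exact (hKernel_le_min_one hct).trans (min_one_mul_le ht.le)

theorem H_scaling_upper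
    (μ : Measure ℝ) (hμ : IntegrableOn (fun t => min 1 t) (Ioi 0) μ)
    (H : ℝ → ℝ)
    (hH : ∀ lam : ℝ, H lam =
      ∫ t in Ioi (0:ℝ),
        (1 - Real.exp (-(lam * t)) - lam * t * Real.exp (-(lam * t))) ∂μ) :
    ∀ lam > (0:ℝ), ∀ x ≥ (1:ℝ), H (lam * x) ≤ x ^ 2 * H lam := by
  intro lam hlam x hx
  rw [hH, hH, ← integral_const_mul]
  refine setIntegral_mono_on
    (integrableOn_hKernel_comp_mul hμ (by positivity : 0 ≤ lam * x))
    ((integrableOn_hKernel_comp_mul hμ hlam.le).const_mul _) measurableSet_Ioi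
    fun t (ht : 0 < t) => ?_
  show hKernel (lam * x * t) ≤ x ^ 2 * hKernel (lam * t)
  rw [mul_right_comm]
  exact hKernel_mul_le (mul_pos hlam ht).le hx
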